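/- arXiv:2206.06439 — 5 statements merged into one kernel-verified Lean document; each statement's English description precedes it below -/
import Mathlib

section
/- Let $Y$ be a positive random variable whose law has continuous density $e^{-\psi}$ on $(0,\infty)$, and suppose there exist $y_0 > 0$, $\alpha \geq 1$, $\beta \geq 1$ such that (i) $y_0\psi'(y_0 y) \geq \beta y$ for all $y \geq \beta$, (ii) $y_0\psi'(y_0 y) \leq -\beta y^{-3}$ for all $0 < y \leq \beta^{-1}$, and (iii) $|y_0^2\psi''(y_0 y)| \leq \alpha(1+y^{-4})$ for all $y > 0$. Then there is a universal constant $c > 0$ such that $\mathrm{Var}(\log Y) \geq c\,\alpha^{-1}\beta^{-6}$. -/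
/-!
Rescaling `Y` to `Y / y₀` turns the potential into `φ y = ψ (y₀ y) - log y₀`, for which the
hypotheses hold with `y₀ = 1`. Conditions (i) and (ii) force `φ` to attain its minimum at a
critical point `y* ∈ [β⁻¹, β]`. On `[y*, ∞)` we have `φ'' ≤ K := α (1 + β⁴)`, so there
`e^{-φ}` dominates the half-Gaussian `M e^{-K (y - y*)² / 2}` with `M = e^{-φ(y*)}`, and total
mass one forces `M² ≤ K`. Condition (i) gives the decay `e^{-φ y} ≤ M e^{-β (y² - β²) / 2}`,
whence `y e^{-φ y} ≤ β M ≤ √(2 α β⁶)` for every `y > 0`. Thus `log Y` has a density bounded by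
`D = √(2 α β⁶)`, puts mass at most `1/2` on any interval of length `1 / (2 D)` around its mean,
and Chebyshev's inequality gives `Var (log Y) ≥ 1 / (32 D²) = 1 / (64 α β⁶)`.
-/

open MeasureTheory ProbabilityTheory Set Real
open scoped Pointwise

theorem sub_le_sub_of_hasDerivAt_le {f g f' g' : ℝ → ℝ} {a b : ℝ} (hab : a ≤ b)
    (hf : ∀ x ∈ Icc a b, HasDerivAt f (f' x) x) (hg : ∀ x ∈ Icc a b, HasDerivAt g (g' x) x)
    (hle : ∀ x ∈ Ioo a b, f' x ≤ g' x) : f b - f a ≤ g b - g a := by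
  have hmono : MonotoneOn (fun x => g x - f x) (Icc a b) := by
    refine monotoneOn_of_hasDerivWithinAt_nonneg (convex_Icc a b) (f' := fun x => g' x - f' x)
      (fun x hx => ((hg x hx).sub (hf x hx)).continuousAt.continuousWithinAt) ?_ ?_ <;>
      rw [interior_Icc]
    · exact fun x hx => ((hg x (Ioo_subset_Icc_self hx)).sub
        (hf x (Ioo_subset_Icc_self hx))).hasDerivWithinAt
    · exact fun x hx => sub_nonneg.2 (hle x hx)
  linarith [hmono (left_mem_Icc.2 hab) (right_mem_Icc.2 hab) hab]

theorem taylor_two_upper_bound {f f' f'' : ℝ → ℝ} {a x K : ℝ} (hax : a ≤ x)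
    (hf : ∀ t ∈ Icc a x, HasDerivAt f (f' t) t) (hf' : ∀ t ∈ Icc a x, HasDerivAt f' (f'' t) t)
    (hK : ∀ t ∈ Icc a x, f'' t ≤ K) :
    f x ≤ f a + f' a * (x - a) + K / 2 * (x - a) ^ 2 := by
  have hslope : ∀ t ∈ Icc a x, f' t ≤ f' a + K * (t - a) := by
    intro t ht
    have := sub_le_sub_of_hasDerivAt_le ht.1 (fun s hs => hf' s ⟨hs.1, hs.2.trans ht.2⟩)
      (fun s _ => hasDerivAt_mul_const K) (fun s hs => hK s ⟨hs.1.le, hs.2.le.trans ht.2⟩)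
    linarith
  have hquad : ∀ t ∈ Icc a x, HasDerivAt (fun t => f' a * t + K / 2 * (t - a) ^ 2)
      (f' a + K * (t - a)) t := fun t _ =>
    (((hasDerivAt_id' t).const_mul (f' a)).fun_add ((((hasDerivAt_id' t).sub_const a).fun_pow
      2).const_mul (K / 2))).congr_deriv (by push_cast; ring)
  have := sub_le_sub_of_hasDerivAt_le hax hf hquad (fun t ht => hslope t (Ioo_subset_Icc_self ht))
  linarith

theorem exists_mem_Icc_isMinOn_Ioi {φ : ℝ → ℝ} {a b : ℝ} (ha : 0 < a) (hab : a ≤ b)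
    (hφ : DifferentiableOn ℝ φ (Ioi 0)) (hleft : ∀ y ∈ Ioc 0 a, deriv φ y ≤ 0)
    (hright : ∀ y ∈ Ici b, 0 ≤ deriv φ y) : ∃ y ∈ Icc a b, IsMinOn φ (Ioi 0) y := by
  have hIci : Ici b ⊆ Ioi 0 := fun x hx => (ha.trans_le hab).trans_le hx
  obtain ⟨y, hy, hmin⟩ := isCompact_Icc.exists_isMinOn (nonempty_Icc.2 hab)
    (hφ.continuousOn.mono fun x hx => ha.trans_le hx.1)
  have hanti : AntitoneOn φ (Ioc 0 a) :=
    antitoneOn_of_deriv_nonpos (convex_Ioc 0 a) (hφ.continuousOn.mono Ioc_subset_Ioi_self)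
      (hφ.mono (interior_subset.trans Ioc_subset_Ioi_self)) fun x hx => hleft x (interior_subset hx)
  have hmono : MonotoneOn φ (Ici b) :=
    monotoneOn_of_deriv_nonneg (convex_Ici b) (hφ.continuousOn.mono hIci)
      (hφ.mono (interior_subset.trans hIci)) fun x hx => hright x (interior_subset hx)
  refine ⟨y, hy, isMinOn_iff.2 fun x (hx : 0 < x) => ?_⟩
  rcases le_total x a with hxa | hax
  · exact (isMinOn_iff.1 hmin a (left_mem_Icc.2 hab)).trans
      (hanti ⟨hx, hxa⟩ (right_mem_Ioc.2 ha) hxa)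
  rcases le_total x b with hxb | hbx
  · exact isMinOn_iff.1 hmin x ⟨hax, hxb⟩
  · exact (isMinOn_iff.1 hmin b (right_mem_Icc.2 hab)).trans (hmono (mem_Ici.2 le_rfl) hbx hbx)

theorem quadratic_lower_bound_of_le_deriv {φ : ℝ → ℝ} {β y₀ : ℝ} (hβ : 0 < β)
    (hφ : DifferentiableOn ℝ φ (Ioi 0)) (hmin : IsMinOn φ (Ioi 0) y₀)
    (h1 : ∀ y, β ≤ y → β * y ≤ deriv φ y) {y : ℝ} (hy : 0 < y) :
    φ y₀ + β * (y ^ 2 - β ^ 2) / 2 ≤ φ y := by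
  have hφy₀ : ∀ x > 0, φ y₀ ≤ φ x := fun x hx => isMinOn_iff.1 hmin x hx
  rcases le_total y β with hyβ | hβy
  · have : β * (y ^ 2 - β ^ 2) / 2 ≤ 0 := by nlinarith [mul_self_le_mul_self hy.le hyβ]
    linarith [hφy₀ y hy]
  · have hder : ∀ t ∈ Icc β y, HasDerivAt φ (deriv φ t) t := fun t ht =>
      (hφ.differentiableAt (Ioi_mem_nhds (hβ.trans_le ht.1))).hasDerivAt
    have hsq : ∀ t ∈ Icc β y, HasDerivAt (fun t => β * t ^ 2 / 2) (β * t) t := fun t _ =>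
      (((hasDerivAt_pow 2 t).const_mul β).div_const 2).congr_deriv (by push_cast; ring)
    have := sub_le_sub_of_hasDerivAt_le hβy hsq hder fun t ht => h1 t ht.1.le
    linarith [hφy₀ β hβ]

theorem mul_exp_neg_quadratic_le {β y : ℝ} (hβ : 1 ≤ β) (hβy : β ≤ y) :
    y * exp (-(β * (y ^ 2 - β ^ 2) / 2)) ≤ β := by
  have hx := add_one_le_exp (β * (y ^ 2 - β ^ 2) / 2)
  have hy : y ≤ β * (β * (y ^ 2 - β ^ 2) / 2 + 1) := by
    nlinarith [mul_nonneg (sub_nonneg.2 hβy) (sub_nonneg.2 hβ)]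
  rw [exp_neg, ← div_eq_mul_inv, div_le_iff₀ (exp_pos _)]
  nlinarith

theorem setIntegral_Ioi_comp_sub (g : ℝ → ℝ) (a : ℝ) :
    ∫ x in Ioi a, g (x - a) = ∫ x in Ioi 0, g x := by
  rw [← integral_indicator measurableSet_Ioi, ← integral_indicator measurableSet_Ioi,
    ← integral_sub_right_eq_self ((Ioi 0).indicator g) a]
  congr 1 with x
  simp [indicator]

theorem sq_le_of_mul_gaussian_le {f : ℝ → ℝ} {a M K : ℝ} (hK : 0 < K) (hM : 0 ≤ M)
    (hf : IntegrableOn f (Ioi a)) (hmass : ∫ x in Ioi a, f x ≤ 1)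
    (hlow : ∀ x ∈ Ioi a, M * exp (-(K / 2) * (x - a) ^ 2) ≤ f x) : M ^ 2 ≤ K := by
  have hgauss : ∫ x in Ioi a, M * exp (-(K / 2) * (x - a) ^ 2) = M * (√(π / (K / 2)) / 2) := by
    rw [integral_const_mul, setIntegral_Ioi_comp_sub (fun x => exp (-(K / 2) * x ^ 2)),
      integral_gaussian_Ioi]
  have hint : IntegrableOn (fun x => M * exp (-(K / 2) * (x - a) ^ 2)) (Ioi a) :=
    (((integrable_exp_neg_mul_sq (half_pos hK)).comp_sub_right a).const_mul M).integrableOn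
  have hle : M * √(π / (K / 2)) ≤ 2 := by
    linarith [hgauss ▸ setIntegral_mono_on hint hf measurableSet_Ioi hlow]
  have hsq : M ^ 2 * (2 * π / K) ≤ 4 := by
    have := pow_le_pow_left₀ (by positivity) hle 2
    rw [mul_pow, sq_sqrt (by positivity), show π / (K / 2) = 2 * π / K by ring] at this
    linarith
  rw [mul_div_assoc', div_le_iff₀ hK] at hsq
  nlinarith [pi_gt_three, sq_nonneg M]

theorem log_sq_le_rpow {y : ℝ} (hy : 0 < y) (hy1 : y ≤ 1) :
    log y ^ 2 ≤ 16 * y ^ (-(1 / 2 : ℝ)) := by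
  have h := abs_log_mul_self_rpow_lt y (1 / 4) hy hy1 (by norm_num)
  have hsq : (log y * y ^ (1 / 4 : ℝ)) ^ 2 ≤ 4 ^ 2 := by
    rw [← sq_abs]; exact pow_le_pow_left₀ (abs_nonneg _) (by linarith) 2
  have hroot : (y ^ (1 / 4 : ℝ)) ^ 2 = y ^ (1 / 2 : ℝ) := by
    rw [← rpow_natCast, ← rpow_mul hy.le]; norm_num
  rw [mul_pow, hroot] at hsq
  rw [rpow_neg hy.le, ← div_eq_mul_inv, le_div_iff₀ (by positivity)]
  linarith

theorem log_sq_le_sq {y : ℝ} (hy : 1 ≤ y) : log y ^ 2 ≤ y ^ 2 :=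
  pow_le_pow_left₀ (log_nonneg hy) ((log_le_sub_one_of_pos (by linarith)).trans (by linarith)) 2

theorem integrableOn_log_sq_mul {f : ℝ → ℝ} {M C c : ℝ} (hc : 0 < c) (hf : ContinuousOn f (Ioi 0))
    (hf0 : ∀ y > 0, 0 ≤ f y) (hfM : ∀ y > 0, f y ≤ M)
    (hfC : ∀ y > 0, f y ≤ C * exp (-c * y ^ 2)) :
    IntegrableOn (fun y => log y ^ 2 * f y) (Ioi 0) := by
  have hcont : ContinuousOn (fun y => log y ^ 2 * f y) (Ioi 0) :=
    ((continuousOn_log.mono fun y hy => ne_of_gt hy).pow 2).mul hf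
  have hnorm : ∀ y > 0, ‖log y ^ 2 * f y‖ = log y ^ 2 * f y := fun y hy =>
    norm_of_nonneg (mul_nonneg (sq_nonneg _) (hf0 y hy))
  rw [← Ioc_union_Ioi_eq_Ioi zero_le_one]
  refine IntegrableOn.union ?_ ?_
  · have hg : IntegrableOn (fun y => 16 * y ^ (-(1 / 2 : ℝ)) * M) (Ioc 0 1) :=
      (intervalIntegrable_iff_integrableOn_Ioc_of_le zero_le_one).1
        (((intervalIntegral.intervalIntegrable_rpow' (by norm_num)).const_mul 16).mul_const M)
    refine hg.mono' ((hcont.mono Ioc_subset_Ioi_self).aestronglyMeasurable measurableSet_Ioc)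
      (ae_restrict_of_forall_mem measurableSet_Ioc fun y hy => ?_)
    have hy0 : 0 < y := hy.1
    rw [hnorm y hy0]
    exact mul_le_mul (log_sq_le_rpow hy0 hy.2) (hfM y hy0) (hf0 y hy0) (by positivity)
  · have hg : IntegrableOn (fun y => y ^ 2 * (C * exp (-c * y ^ 2))) (Ioi 1) := by
      refine (((integrable_rpow_mul_exp_neg_mul_sq hc (s := 2) (by norm_num)).const_mul C).congr
        ?_).integrableOn
      exact Filter.Eventually.of_forall fun y => by simp only [rpow_two]; ring
    refine hg.mono' ((hcont.mono fun y (hy : 1 < y) => zero_lt_one.trans hy).aestronglyMeasurable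
      measurableSet_Ioi) (ae_restrict_of_forall_mem measurableSet_Ioi fun y (hy : 1 < y) => ?_)
    have hy0 : 0 < y := zero_lt_one.trans hy
    rw [hnorm y hy0]
    exact mul_le_mul (log_sq_le_sq hy.le) (hfC y hy0) (hf0 y hy0) (sq_nonneg y)

theorem exists_gaussian_domination {φ : ℝ → ℝ} {α β : ℝ} (hφ : ContDiffOn ℝ 2 φ (Ioi 0))
    (hα : 0 < α) (hβ : 1 ≤ β) (hint : IntegrableOn (fun y => exp (-φ y)) (Ioi 0))
    (hmass : ∫ y in Ioi 0, exp (-φ y) = 1)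
    (h1 : ∀ y, β ≤ y → β * y ≤ deriv φ y)
    (h2 : ∀ y, 0 < y → y ≤ β⁻¹ → deriv φ y ≤ 0)
    (h3 : ∀ y, 0 < y → deriv (deriv φ) y ≤ α * (1 + y⁻¹ ^ 4)) :
    ∃ M, M ^ 2 ≤ α * (1 + β ^ 4) ∧ (∀ y > 0, exp (-φ y) ≤ M) ∧
      ∀ y > 0, exp (-φ y) ≤ M * exp (-(β * (y ^ 2 - β ^ 2) / 2)) := by
  have hβ0 : 0 < β := zero_lt_one.trans_le hβ
  have hdiff : DifferentiableOn ℝ φ (Ioi 0) := hφ.differentiableOn (by norm_num)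
  have hdiff' : DifferentiableOn ℝ (deriv φ) (Ioi 0) :=
    (hφ.deriv_of_isOpen (m := 1) isOpen_Ioi (by norm_num)).differentiableOn one_ne_zero
  obtain ⟨y₀, hy₀, hmin⟩ := exists_mem_Icc_isMinOn_Ioi (inv_pos.2 hβ0)
    ((inv_le_one_of_one_le₀ hβ).trans hβ) hdiff
    (fun y hy => h2 y hy.1 hy.2)
    (fun y hy => (mul_nonneg hβ0.le (hβ0.le.trans hy)).trans (h1 y hy))
  have hy₀pos : 0 < y₀ := (inv_pos.2 hβ0).trans_le hy₀.1
  have hcrit : deriv φ y₀ = 0 := (hmin.isLocalMin (Ioi_mem_nhds hy₀pos)).deriv_eq_zero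
  have hφy₀ : ∀ y > 0, φ y₀ ≤ φ y := fun y hy => isMinOn_iff.1 hmin y hy
  set K := α * (1 + β ^ 4)
  have hK : ∀ t, y₀ ≤ t → deriv (deriv φ) t ≤ K := fun t ht => by
    have ht0 : 0 < t := hy₀pos.trans_le ht
    have htβ : t⁻¹ ≤ β := inv_le_of_inv_le₀ hβ0 (hy₀.1.trans ht)
    calc deriv (deriv φ) t ≤ α * (1 + t⁻¹ ^ 4) := h3 t ht0
      _ ≤ α * (1 + β ^ 4) := by gcongr
  have htaylor : ∀ x, y₀ ≤ x → φ x ≤ φ y₀ + K / 2 * (x - y₀) ^ 2 := fun x hx => by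
    have := taylor_two_upper_bound hx
      (fun t ht => (hdiff.differentiableAt (Ioi_mem_nhds (hy₀pos.trans_le ht.1))).hasDerivAt)
      (fun t ht => (hdiff'.differentiableAt (Ioi_mem_nhds (hy₀pos.trans_le ht.1))).hasDerivAt)
      (fun t ht => hK t ht.1)
    rwa [hcrit, zero_mul, add_zero] at this
  have hMK : exp (-φ y₀) ^ 2 ≤ K := by
    refine sq_le_of_mul_gaussian_le (by positivity) (exp_pos _).le
      (hint.mono_set (Ioi_subset_Ioi hy₀pos.le)) ?_ fun x hx => ?_
    · rw [← hmass]
      exact setIntegral_mono_set hint (ae_of_all _ fun _ => (exp_pos _).le)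
        (Ioi_subset_Ioi hy₀pos.le).eventuallyLE
    · rw [← exp_add]
      exact exp_le_exp.2 (by linarith [htaylor x (le_of_lt hx)])
  refine ⟨exp (-φ y₀), hMK, fun y hy => exp_le_exp.2 (neg_le_neg (hφy₀ y hy)), fun y hy => ?_⟩
  rw [← exp_add]
  exact exp_le_exp.2 (by linarith [quadratic_lower_bound_of_le_deriv hβ0 hdiff hmin h1 hy])

def HasDensityOnIoi {Ω : Type*} [MeasurableSpace Ω] (Y : Ω → ℝ) (μ : Measure Ω) (f : ℝ → ℝ) :
    Prop :=
  ∀ s : Set ℝ, MeasurableSet s → (μ (Y ⁻¹' s)).toReal = ∫ y in s ∩ Ioi 0, f y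

namespace HasDensityOnIoi

variable {Ω : Type*} [MeasurableSpace Ω] {μ : Measure Ω} {Y : Ω → ℝ} {f : ℝ → ℝ}

theorem integral_eq_one [IsProbabilityMeasure μ] (h : HasDensityOnIoi Y μ f) :
    ∫ y in Ioi 0, f y = 1 := by
  simpa using (h univ MeasurableSet.univ).symm

theorem integrableOn [IsProbabilityMeasure μ] (h : HasDensityOnIoi Y μ f) :
    IntegrableOn f (Ioi 0) := by
  by_contra hf
  simpa [integral_undef hf] using h.integral_eq_one

theorem div_const (h : HasDensityOnIoi Y μ f) {c : ℝ} (hc : 0 < c) :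
    HasDensityOnIoi (fun ω => Y ω / c) μ fun y => c * f (c * y) := by
  intro s hs
  have hset : c • (s ∩ Ioi 0) = (· / c) ⁻¹' s ∩ Ioi 0 := by
    ext x
    rw [mem_smul_set_iff_inv_smul_mem₀ hc.ne']
    simp [div_eq_inv_mul, hc]
  have hscale := Measure.setIntegral_comp_smul_of_pos volume f (s ∩ Ioi 0) hc
  simp only [smul_eq_mul, Module.finrank_self, pow_one] at hscale
  rw [show (fun ω => Y ω / c) ⁻¹' s = Y ⁻¹' ((· / c) ⁻¹' s) from rfl,
    h _ (measurable_div_const c hs), integral_const_mul, hscale, hset, mul_inv_cancel_left₀ hc.ne']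

theorem map_eq_withDensity [IsProbabilityMeasure μ] (h : HasDensityOnIoi Y μ f)
    (hY : Measurable Y) (hf0 : ∀ y > 0, 0 ≤ f y) :
    μ.map Y = (volume.restrict (Ioi 0)).withDensity fun y => ENNReal.ofReal (f y) := by
  ext s hs
  rw [Measure.map_apply hY hs, withDensity_apply' _ s, Measure.restrict_restrict hs,
    ← ofReal_integral_eq_lintegral_ofReal (h.integrableOn.mono_set inter_subset_right)
      (ae_restrict_of_forall_mem (hs.inter measurableSet_Ioi) fun y hy => hf0 y hy.2),
    ← h s hs, ENNReal.ofReal_toReal (measure_ne_top μ _)]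

theorem memLp_log [IsProbabilityMeasure μ] (h : HasDensityOnIoi Y μ f) (hY : Measurable Y)
    (hf : ContinuousOn f (Ioi 0)) (hf0 : ∀ y > 0, 0 ≤ f y)
    (hlog : IntegrableOn (fun y => log y ^ 2 * f y) (Ioi 0)) :
    MemLp (fun ω => log (Y ω)) 2 μ := by
  rw [memLp_two_iff_integrable_sq hY.log.aestronglyMeasurable]
  have hdens : AEMeasurable (fun y => ENNReal.ofReal (f y)) (volume.restrict (Ioi 0)) :=
    ENNReal.measurable_ofReal.comp_aemeasurable (hf.aemeasurable measurableSet_Ioi)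
  have : Integrable (fun y => log y ^ 2) (μ.map Y) := by
    rw [h.map_eq_withDensity hY hf0, integrable_withDensity_iff_integrable_smul₀' hdens
      (ae_of_all _ fun _ => ENNReal.ofReal_lt_top)]
    refine hlog.congr_fun (fun y hy => ?_) measurableSet_Ioi
    simp [ENNReal.toReal_ofReal (hf0 y hy), mul_comm]
  exact (integrable_map_measure ((measurable_log.pow_const 2).aestronglyMeasurable)
    hY.aemeasurable).1 this

theorem measureReal_preimage_Icc_le (h : HasDensityOnIoi Y μ f) (hf0 : ∀ y > 0, 0 ≤ f y)
    {D : ℝ} (hD : ∀ y > 0, y * f y ≤ D) {l r : ℝ} (hl : 0 < l) (hlr : l ≤ r) :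
    μ.real (Y ⁻¹' Icc l r) ≤ D * log (r / l) := by
  have hpos : Icc l r ⊆ Ioi 0 := fun y hy => hl.trans_le hy.1
  rw [measureReal_def, h _ measurableSet_Icc, inter_eq_left.2 hpos]
  calc ∫ y in Icc l r, f y ≤ ∫ y in Icc l r, D * y⁻¹ := by
        refine integral_mono_of_nonneg (ae_restrict_of_forall_mem measurableSet_Icc
          fun y hy => hf0 y (hpos hy)) ?_ (ae_restrict_of_forall_mem measurableSet_Icc
          fun y (hy : y ∈ Icc l r) => ?_)
        · exact (continuousOn_const.mul (continuousOn_inv₀.mono fun y hy =>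
            (hpos hy).ne')).integrableOn_compact isCompact_Icc
        · show f y ≤ D * y⁻¹
          rw [← div_eq_mul_inv, le_div_iff₀ (hpos hy), mul_comm]
          exact hD y (hpos hy)
    _ = D * log (r / l) := by
        rw [integral_Icc_eq_integral_Ioc, ← intervalIntegral.integral_of_le hlr,
          intervalIntegral.integral_const_mul, integral_inv_of_pos hl (hl.trans_le hlr)]

theorem variance_log_ge [IsProbabilityMeasure μ] (h : HasDensityOnIoi Y μ f)
    (hYpos : ∀ ω, 0 < Y ω) (hX : MemLp (fun ω => log (Y ω)) 2 μ) (hf0 : ∀ y > 0, 0 ≤ f y)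
    {D : ℝ} (hD0 : 0 < D) (hD : ∀ y > 0, y * f y ≤ D) :
    1 / (32 * D ^ 2) ≤ variance (fun ω => log (Y ω)) μ := by
  set m := μ[fun ω => log (Y ω)]
  set T := 1 / (4 * D)
  have hT : 0 < T := by positivity
  have hcentral : μ.real (Y ⁻¹' Icc (exp (m - T)) (exp (m + T))) ≤ 1 / 2 := by
    have := h.measureReal_preimage_Icc_le hf0 hD (l := exp (m - T)) (r := exp (m + T)) (exp_pos _)
      (exp_le_exp.2 (by linarith))
    rwa [← exp_sub, log_exp, show m + T - (m - T) = 2 * T by ring,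
      show D * (2 * T) = 1 / 2 by simp only [T]; field_simp; ring] at this
  have hcover : univ ⊆ {ω | T ≤ |log (Y ω) - m|} ∪ Y ⁻¹' Icc (exp (m - T)) (exp (m + T)) := by
    intro ω _
    by_cases hω : T ≤ |log (Y ω) - m|
    · exact Or.inl hω
    · obtain ⟨hlo, hhi⟩ := abs_lt.1 (not_le.1 hω)
      right
      rw [mem_preimage, ← exp_log (hYpos ω)]
      exact ⟨exp_le_exp.2 (by linarith), exp_le_exp.2 (by linarith)⟩
  have htail : 1 / 2 ≤ μ.real {ω | T ≤ |log (Y ω) - m|} := by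
    have := (measureReal_mono hcover).trans (measureReal_union_le (μ := μ) _ _)
    rw [probReal_univ] at this
    linarith
  have hcheb : μ.real {ω | T ≤ |log (Y ω) - m|} ≤ variance (fun ω => log (Y ω)) μ / T ^ 2 :=
    ENNReal.toReal_le_of_le_ofReal (by have := variance_nonneg (fun ω => log (Y ω)) μ; positivity)
      (meas_ge_le_variance_div_sq hX hT)
  have hT2 : T ^ 2 / 2 = 1 / (32 * D ^ 2) := by simp only [T]; field_simp; ring
  rw [← hT2, div_le_iff₀' two_pos]
  rw [le_div_iff₀ (by positivity)] at hcheb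
  nlinarith

end HasDensityOnIoi

theorem variance_log_ge_of_unit_scale {Ω : Type*} [MeasurableSpace Ω] {μ : Measure Ω}
    [IsProbabilityMeasure μ] {Y : Ω → ℝ} {φ : ℝ → ℝ} {α β : ℝ} (hY : Measurable Y)
    (hYpos : ∀ ω, 0 < Y ω) (hφ : ContDiffOn ℝ 2 φ (Ioi 0))
    (hdens : HasDensityOnIoi Y μ fun y => exp (-φ y)) (hα : 0 < α) (hβ : 1 ≤ β)
    (h1 : ∀ y, β ≤ y → β * y ≤ deriv φ y)
    (h2 : ∀ y, 0 < y → y ≤ β⁻¹ → deriv φ y ≤ 0)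
    (h3 : ∀ y, 0 < y → deriv (deriv φ) y ≤ α * (1 + y⁻¹ ^ 4)) :
    64⁻¹ * α⁻¹ * β⁻¹ ^ 6 ≤ variance (fun ω => log (Y ω)) μ := by
  have hβ0 : 0 < β := zero_lt_one.trans_le hβ
  obtain ⟨M, hMK, hM, hgauss⟩ := exists_gaussian_domination hφ hα hβ hdens.integrableOn
    hdens.integral_eq_one h1 h2 h3
  have hM0 : 0 ≤ M := (exp_pos _).le.trans (hM 1 one_pos)
  have hf0 : ∀ y > 0, 0 ≤ exp (-φ y) := fun y _ => (exp_pos _).le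
  have hD : ∀ y > 0, y * exp (-φ y) ≤ √(2 * α * β ^ 6) := fun y hy => by
    have hβM : y * exp (-φ y) ≤ β * M := by
      rcases le_total y β with hyβ | hβy
      · exact mul_le_mul hyβ (hM y hy) (exp_pos _).le hβ0.le
      · calc y * exp (-φ y) ≤ y * (M * exp (-(β * (y ^ 2 - β ^ 2) / 2))) := by
              gcongr; exact hgauss y hy
          _ = M * (y * exp (-(β * (y ^ 2 - β ^ 2) / 2))) := by ring
          _ ≤ M * β := by gcongr; exact mul_exp_neg_quadratic_le hβ hβy
          _ = β * M := mul_comm M β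
    refine hβM.trans ((le_sqrt (mul_nonneg hβ0.le hM0) (by positivity)).2 ?_)
    have : β ^ 2 ≤ β ^ 6 := pow_le_pow_right₀ hβ (by norm_num)
    calc (β * M) ^ 2 = β ^ 2 * M ^ 2 := by ring
      _ ≤ β ^ 2 * (α * (1 + β ^ 4)) := by gcongr
      _ ≤ 2 * α * β ^ 6 := by nlinarith
  have hcont : ContinuousOn (fun y => exp (-φ y)) (Ioi 0) :=
    continuous_exp.comp_continuousOn hφ.continuousOn.neg
  have hlog := integrableOn_log_sq_mul (c := β / 2) (C := M * exp (β ^ 3 / 2)) (by positivity)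
    hcont hf0 hM fun y hy => (hgauss y hy).trans_eq (by rw [mul_assoc, ← exp_add]; ring_nf)
  calc 64⁻¹ * α⁻¹ * β⁻¹ ^ 6 = 1 / (32 * √(2 * α * β ^ 6) ^ 2) := by
        rw [sq_sqrt (by positivity)]; field_simp; ring
    _ ≤ _ := hdens.variance_log_ge hYpos (hdens.memLp_log hY hcont hf0 hlog) hf0
        (by positivity) hD

/-- Logarithmic variance lower bound (Lemma 3.4 of the paper): if `Y > 0` has continuous
density `e^{-ψ}` on `(0,∞)` with `ψ` twice continuously differentiable, and there are
`y₀ > 0`, `α ≥ 1`, `β ≥ 1` such that `y₀ ψ'(y₀ y) ≥ β y` for `y ≥ β`,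
`y₀ ψ'(y₀ y) ≤ -β y⁻³` for `0 < y ≤ β⁻¹`, and `|y₀² ψ''(y₀ y)| ≤ α (1 + y⁻⁴)` for `y > 0`,
then `Var(log Y) ≥ c α⁻¹ β⁻⁶` for a universal constant `c > 0`. -/
theorem stmt_0 :
    ∃ c : ℝ, 0 < c ∧
      ∀ (Ω : Type) (_ : MeasurableSpace Ω) (μ : Measure Ω) (_ : IsProbabilityMeasure μ)
        (Y : Ω → ℝ) (ψ : ℝ → ℝ) (y₀ α β : ℝ),
        Measurable Y → (∀ ω, 0 < Y ω) →
        ContDiffOn ℝ 2 ψ (Ioi 0) →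
        (∀ s : Set ℝ, MeasurableSet s →
          (μ (Y ⁻¹' s)).toReal = ∫ y in s ∩ Ioi 0, Real.exp (-ψ y)) →
        0 < y₀ → 1 ≤ α → 1 ≤ β →
        (∀ y : ℝ, β ≤ y → β * y ≤ y₀ * deriv ψ (y₀ * y)) →
        (∀ y : ℝ, 0 < y → y ≤ β⁻¹ → y₀ * deriv ψ (y₀ * y) ≤ -(β * y⁻¹ ^ 3)) →
        (∀ y : ℝ, 0 < y → |y₀ ^ 2 * deriv (deriv ψ) (y₀ * y)| ≤ α * (1 + y⁻¹ ^ 4)) →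
        c * α⁻¹ * β⁻¹ ^ 6 ≤ variance (fun ω => Real.log (Y ω)) μ := by
  refine ⟨64⁻¹, by norm_num, ?_⟩
  intro Ω _ μ _ Y ψ y₀ α β hY hYpos hψ hdens hy₀ hα hβ h1 h2 h3
  set φ : ℝ → ℝ := fun y => ψ (y₀ * y) - log y₀
  have hφ : ContDiffOn ℝ 2 φ (Ioi 0) :=
    (hψ.comp (contDiff_const.mul contDiff_id).contDiffOn fun y (hy : 0 < y) => mul_pos hy₀ hy).sub
      contDiffOn_const
  have hφ' : deriv φ = fun y => y₀ * deriv ψ (y₀ * y) := funext fun y => by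
    rw [deriv_sub_const, deriv_comp_mul_left, smul_eq_mul]
  have hφ'' : deriv (deriv φ) = fun y => y₀ ^ 2 * deriv (deriv ψ) (y₀ * y) := funext fun y => by
    rw [hφ', deriv_const_mul_field']
    simp only [deriv_comp_mul_left, smul_eq_mul]
    ring
  have hdensφ : HasDensityOnIoi (fun ω => Y ω / y₀) μ fun y => exp (-φ y) := by
    convert HasDensityOnIoi.div_const hdens hy₀ using 2 with y
    rw [neg_sub, sub_eq_add_neg, exp_add, exp_log hy₀]
  have hvar : variance (fun ω => log (Y ω / y₀)) μ = variance (fun ω => log (Y ω)) μ := by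
    simp_rw [log_div (hYpos _).ne' hy₀.ne']
    exact variance_sub_const hY.log.aestronglyMeasurable _
  rw [← hvar]
  exact variance_log_ge_of_unit_scale (hY.div_const y₀) (fun ω => div_pos (hYpos ω) hy₀) hφ
    hdensφ (by linarith) hβ (by simpa [hφ'] using h1)
    (fun y hy hyβ => by rw [hφ']; exact (h2 y hy hyβ).trans (neg_nonpos.2 (by positivity)))
    (fun y hy => by rw [hφ'']; exact (le_abs_self _).trans (h3 y hy))
end

section
/- Let $\psi : (0,\infty) \to \mathbb{R}$ be continuously differentiable with $e^{-\psi}$ a probability density, and suppose $\beta \geq 1$ satisfies $\psi'(y) \geq \beta y$ for all $y \geq \beta$. Then $\int_{2\beta}^\infty |\log y|\, e^{-\psi(y)}\,dy \leq \beta^{-2}$. -/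
/-!
For `y ≥ β` the hypothesis `ψ' ≥ β y` makes `ψ` increasing, so the mass `≤ 1` of `e^{-ψ}` on
`[β, 2β]` gives `e^{-ψ(2β)} ≤ β⁻¹`; it also gives the Gaussian tail
`e^{-ψ(y)} ≤ e^{-ψ(2β)} e^{-β (y² - 4β²) / 2}` for `y ≥ 2β`. With `|log y| ≤ y` the integral is then
at most `e^{-ψ(2β)} ∫_{2β}^∞ y e^{-β (y² - 4β²) / 2} dy = β⁻¹ e^{-ψ(2β)} ≤ β⁻²`.
-/

open MeasureTheory Set Filter Real

theorem AntitoneOn.sub_mul_le_intervalIntegral {f : ℝ → ℝ} {a b : ℝ} (hab : a ≤ b)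
    (hf : AntitoneOn f (Icc a b)) : (b - a) * f b ≤ ∫ x in a..b, f x := by
  rw [← smul_eq_mul, ← intervalIntegral.integral_const]
  refine intervalIntegral.integral_mono_on hab intervalIntegrable_const
    (hf.mono (uIcc_of_le hab).subset).intervalIntegrable fun x hx => ?_
  exact hf hx ⟨hab, le_rfl⟩ hx.2

theorem integral_Ioi_mul_exp_sq_sub_sq {c β : ℝ} (hc : 0 ≤ c) (hβ : 0 < β) :
    IntegrableOn (fun y => y * exp (β / 2 * (c ^ 2 - y ^ 2))) (Ioi c) ∧
      ∫ y in Ioi c, y * exp (β / 2 * (c ^ 2 - y ^ 2)) = β⁻¹ := by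
  have hF : ∀ y ∈ Ici c, HasDerivAt (fun y => -β⁻¹ * exp (β / 2 * (c ^ 2 - y ^ 2)))
      (y * exp (β / 2 * (c ^ 2 - y ^ 2))) y := fun y _ =>
    ((((hasDerivAt_pow 2 y).const_sub (c ^ 2)).const_mul (β / 2)).exp.const_mul (-β⁻¹)).congr_deriv
      (by field_simp; ring)
  have hnonneg : ∀ y ∈ Ioi c, 0 ≤ y * exp (β / 2 * (c ^ 2 - y ^ 2)) := fun y hy =>
    mul_nonneg (hc.trans hy.le) (exp_pos _).le
  have hlim : Tendsto (fun y => -β⁻¹ * exp (β / 2 * (c ^ 2 - y ^ 2))) atTop (nhds 0) := by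
    have harg : Tendsto (fun y : ℝ => β / 2 * (c ^ 2 - y ^ 2)) atTop atBot :=
      (tendsto_atBot_add_const_left _ (c ^ 2) (tendsto_neg_atTop_atBot.comp
        (tendsto_pow_atTop two_ne_zero))).const_mul_atBot (by positivity)
    simpa using (tendsto_exp_atBot.comp harg).const_mul (-β⁻¹)
  refine ⟨integrableOn_Ioi_deriv_of_nonneg' hF hnonneg hlim, ?_⟩
  rw [integral_Ioi_of_hasDerivAt_of_nonneg' hF hnonneg hlim]
  simp

theorem abs_log_le_self {y : ℝ} (hy : 1 ≤ y) : |log y| ≤ y := by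
  rw [abs_of_nonneg (log_nonneg hy)]
  linarith [log_le_sub_one_of_pos (zero_lt_one.trans_le hy)]

section GrowthOfPotential

variable {ψ : ℝ → ℝ} {a c : ℝ}

theorem monotoneOn_sub_mul_sq_of_mul_le_deriv (ha : 0 < a) (hc : 0 < c)
    (hderiv : ∀ y, a ≤ y → c * y ≤ deriv ψ y) :
    MonotoneOn (fun y => ψ y - c / 2 * y ^ 2) (Ici a) := by
  -- `deriv ψ y ≥ c y > 0` forces `ψ` to be differentiable at `y`: `deriv` is `0` elsewhere.
  have hdiff : ∀ y ∈ Ici a, HasDerivAt (fun y => ψ y - c / 2 * y ^ 2) (deriv ψ y - c * y) y :=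
    fun y hy => by
      have hψ := differentiableAt_of_deriv_ne_zero
        (by nlinarith [hderiv y hy, mul_pos hc (ha.trans_le hy)] : deriv ψ y ≠ 0)
      exact (hψ.hasDerivAt.sub ((hasDerivAt_pow 2 y).const_mul (c / 2))).congr_deriv
        (by field_simp; ring)
  refine monotoneOn_of_deriv_nonneg (convex_Ici a)
    (fun y hy => (hdiff y hy).continuousAt.continuousWithinAt)
    (fun y hy => (hdiff y (interior_subset hy)).differentiableAt.differentiableWithinAt)
    fun y hy => ?_
  rw [(hdiff y (interior_subset hy)).deriv]
  linarith [hderiv y (interior_subset hy)]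

theorem add_mul_sq_sub_sq_le_of_mul_le_deriv (ha : 0 < a) (hc : 0 < c)
    (hderiv : ∀ y, a ≤ y → c * y ≤ deriv ψ y) {x y : ℝ} (hx : a ≤ x) (hxy : x ≤ y) :
    ψ x + c / 2 * (y ^ 2 - x ^ 2) ≤ ψ y := by
  have := monotoneOn_sub_mul_sq_of_mul_le_deriv ha hc hderiv hx (hx.trans hxy) hxy
  simp only at this
  linarith

theorem monotoneOn_of_mul_le_deriv (ha : 0 < a) (hc : 0 < c)
    (hderiv : ∀ y, a ≤ y → c * y ≤ deriv ψ y) : MonotoneOn ψ (Ici a) := fun x hx y hy hxy => by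
  have hsq : x ^ 2 ≤ y ^ 2 := pow_le_pow_left₀ (ha.trans_le hx).le hxy 2
  nlinarith [add_mul_sq_sub_sq_le_of_mul_le_deriv ha hc hderiv hx hxy]

theorem abs_log_mul_exp_neg_le_of_mul_le_deriv (ha : 0 < a) (hc : 0 < c)
    (hderiv : ∀ y, a ≤ y → c * y ≤ deriv ψ y) {x y : ℝ} (hx : a ≤ x) (hx₁ : 1 ≤ x)
    (hxy : x ≤ y) :
    |log y| * exp (-ψ y) ≤ exp (-ψ x) * (y * exp (c / 2 * (x ^ 2 - y ^ 2))) := by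
  have hexp : exp (-ψ y) ≤ exp (-ψ x) * exp (c / 2 * (x ^ 2 - y ^ 2)) := by
    rw [← exp_add, exp_le_exp]
    linarith [add_mul_sq_sub_sq_le_of_mul_le_deriv ha hc hderiv hx hxy]
  calc |log y| * exp (-ψ y) ≤ y * (exp (-ψ x) * exp (c / 2 * (x ^ 2 - y ^ 2))) :=
        mul_le_mul (abs_log_le_self (hx₁.trans hxy)) hexp (exp_pos _).le (by linarith)
    _ = _ := by ring

end GrowthOfPotential

theorem mul_exp_neg_le_one {ψ : ℝ → ℝ} {a b : ℝ} (ha : 0 ≤ a) (hab : a ≤ b)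
    (hψ : MonotoneOn ψ (Icc a b)) (hdens : ∫ y in Ioi (0 : ℝ), exp (-ψ y) = 1) :
    (b - a) * exp (-ψ b) ≤ 1 := by
  have hint : IntegrableOn (fun y => exp (-ψ y)) (Ioi 0) :=
    Integrable.of_integral_ne_zero (by rw [hdens]; exact one_ne_zero)
  have hanti : AntitoneOn (fun y => exp (-ψ y)) (Icc a b) := fun x hx y hy hxy =>
    exp_le_exp.mpr (neg_le_neg (hψ hx hy hxy))
  calc (b - a) * exp (-ψ b) ≤ ∫ y in a..b, exp (-ψ y) := hanti.sub_mul_le_intervalIntegral hab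
    _ = ∫ y in Ioc a b, exp (-ψ y) := intervalIntegral.integral_of_le hab
    _ ≤ ∫ y in Ioi 0, exp (-ψ y) := setIntegral_mono_set hint
        (ae_of_all _ fun _ => (exp_pos _).le)
        (Eventually.of_forall fun y hy => ha.trans_lt hy.1)
    _ = 1 := hdens

theorem stmt_1_general (ψ : ℝ → ℝ) (β : ℝ) (hβ : 1 ≤ β)
    (hdens : ∫ y in Ioi (0 : ℝ), Real.exp (-ψ y) = 1)
    (hderiv : ∀ y : ℝ, β ≤ y → β * y ≤ deriv ψ y) :
    ∫ y in Ioi (2 * β), |Real.log y| * Real.exp (-ψ y) ≤ β⁻¹ ^ 2 := by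
  have hβ0 : 0 < β := zero_lt_one.trans_le hβ
  have hpeak : exp (-ψ (2 * β)) ≤ β⁻¹ := by
    have hmass := mul_exp_neg_le_one (a := β) (b := 2 * β) hβ0.le (by linarith)
      ((monotoneOn_of_mul_le_deriv hβ0 hβ0 hderiv).mono Icc_subset_Ici_self) hdens
    rw [show 2 * β - β = β by ring] at hmass
    rw [inv_eq_one_div, le_div_iff₀ hβ0]
    linarith
  obtain ⟨hint, hval⟩ := integral_Ioi_mul_exp_sq_sub_sq (c := 2 * β) (by positivity) hβ0
  have hpt : ∀ y ∈ Ioi (2 * β), |log y| * exp (-ψ y) ≤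
      exp (-ψ (2 * β)) * (y * exp (β / 2 * ((2 * β) ^ 2 - y ^ 2))) := fun y hy =>
    abs_log_mul_exp_neg_le_of_mul_le_deriv hβ0 hβ0 hderiv (by linarith) (by linarith) hy.le
  calc ∫ y in Ioi (2 * β), |log y| * exp (-ψ y)
      ≤ ∫ y in Ioi (2 * β), exp (-ψ (2 * β)) * (y * exp (β / 2 * ((2 * β) ^ 2 - y ^ 2))) :=
        integral_mono_of_nonneg (ae_of_all _ fun _ => by positivity) (hint.const_mul _)
          (ae_restrict_of_forall_mem measurableSet_Ioi hpt)
    _ = exp (-ψ (2 * β)) * β⁻¹ := by rw [integral_const_mul, hval]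
    _ ≤ β⁻¹ ^ 2 := by rw [sq]; exact mul_le_mul_of_nonneg_right hpeak (by positivity)

/-- If `e^{-ψ}` is a probability density on `(0,∞)`, `ψ` is continuously differentiable there,
`β ≥ 1`, and `ψ'(y) ≥ β y` for `y ≥ β`, then `∫_{2β}^∞ |log y| e^{-ψ(y)} dy ≤ β⁻²`. -/
theorem stmt_1 (ψ : ℝ → ℝ) (β : ℝ) (hβ : 1 ≤ β)
    (hsmooth : ContDiffOn ℝ 1 ψ (Ioi 0))
    (hdens : ∫ y in Ioi (0 : ℝ), Real.exp (-ψ y) = 1)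
    (hderiv : ∀ y : ℝ, β ≤ y → β * y ≤ deriv ψ y) :
    ∫ y in Ioi (2 * β), |Real.log y| * Real.exp (-ψ y) ≤ β⁻¹ ^ 2 :=
  stmt_1_general ψ β hβ hdens hderiv
end

section
/- Let $\psi : (0,\infty) \to \mathbb{R}$ be continuously differentiable with $e^{-\psi}$ a probability density, and suppose $\beta \geq 1$ satisfies $\psi'(y) \leq -\beta y^{-3}$ for all $0 < y \leq \beta^{-1}$. Then $\int_0^{(2\beta)^{-1}} |\log y|\, e^{-\psi(y)}\,dy \leq \frac{1}{2}\beta^{-2}$. -/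
/-!
Since `ψ' < 0` on `(0, β⁻¹]`, the density `e^{-ψ}` increases there, so with `c = (2β)⁻¹` the
mass of `[c, 2c]` gives `c e^{-ψ(c)} ≤ 1`. On `(0, c]` we have
`|log y| ≤ y⁻¹ ≤ c² y⁻³ ≤ β⁻¹ c² (-ψ'(y))`, so the integrand is dominated by the derivative of
`β⁻¹ c² e^{-ψ}`; integrating over `(a, c)` bounds the integral by
`β⁻¹ c² e^{-ψ(c)} ≤ 2c² = β⁻²/2`, uniformly in `a > 0`.
-/

open MeasureTheory Set Real Filter Topology

lemma setIntegral_Ioo_le_of_forall_Ioo {f : ℝ → ℝ} {a b C : ℝ} (hab : a < b) (hC : 0 ≤ C)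
    (h : ∀ x ∈ Ioo a b, ∫ y in Ioo x b, f y ≤ C) : ∫ y in Ioo a b, f y ≤ C := by
  by_cases hf : IntegrableOn f (Ioo a b)
  swap
  · rw [integral_undef hf]
    exact hC
  have hprim : ContinuousWithinAt (fun x => ∫ y in x..b, f y) (Icc a b) a := by
    have := intervalIntegral.continuousOn_primitive_interval_left (a := a) (b := b)
      (μ := volume) (f := f)
    rw [uIcc_of_le hab.le] at this
    exact this ((integrableOn_Icc_iff_integrableOn_Ioo).2 hf) a (left_mem_Icc.2 hab.le)
  have hlim : Tendsto (fun x => ∫ y in x..b, f y) (𝓝[>] a) (𝓝 (∫ y in a..b, f y)) :=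
    ((hprim.mono_of_mem_nhdsWithin (Icc_mem_nhdsGE hab)).mono Ioi_subset_Ici_self).tendsto
  rw [← integral_Ioc_eq_integral_Ioo, ← intervalIntegral.integral_of_le hab.le]
  refine le_of_tendsto hlim ?_
  filter_upwards [Ioo_mem_nhdsGT hab] with x hx
  rw [intervalIntegral.integral_of_le hx.2.le, integral_Ioc_eq_integral_Ioo]
  exact h x hx

lemma MonotoneOn.mul_le_setIntegral_Ioc {f : ℝ → ℝ} {a b : ℝ} (hab : a ≤ b)
    (hf : MonotoneOn f (Icc a b)) : (b - a) * f a ≤ ∫ x in Ioc a b, f x := by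
  have hint : IntegrableOn f (Ioc a b) :=
    (hf.integrableOn_isCompact isCompact_Icc).mono_set Ioc_subset_Icc_self
  calc (b - a) * f a = ∫ _ in Ioc a b, f a := by
        rw [setIntegral_const, measureReal_def, volume_Ioc, ENNReal.toReal_ofReal (by linarith),
          smul_eq_mul]
    _ ≤ ∫ x in Ioc a b, f x :=
        setIntegral_mono_on (integrableOn_const measure_Ioc_lt_top.ne) hint measurableSet_Ioc
          fun x hx => hf (left_mem_Icc.2 hab) (Ioc_subset_Icc_self hx) hx.1.le

lemma antitoneOn_Ioc_of_deriv_nonpos {ψ : ℝ → ℝ} {b : ℝ} (hψ : DifferentiableOn ℝ ψ (Ioi 0))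
    (hderiv : ∀ y ∈ Ioo 0 b, deriv ψ y ≤ 0) : AntitoneOn ψ (Ioc 0 b) :=
  antitoneOn_of_deriv_nonpos (convex_Ioc 0 b) (hψ.continuousOn.mono Ioc_subset_Ioi_self)
    (hψ.mono (interior_subset.trans Ioc_subset_Ioi_self)) (by rwa [interior_Ioc])

lemma exp_neg_le_inv_of_antitoneOn {ψ : ℝ → ℝ} {c : ℝ} (hc : 0 < c)
    (hdens : ∫ y in Ioi (0 : ℝ), exp (-ψ y) = 1) (hψ : AntitoneOn ψ (Icc c (2 * c))) :
    exp (-ψ c) ≤ c⁻¹ := by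
  have hint : IntegrableOn (fun y => exp (-ψ y)) (Ioi 0) := by
    by_contra h
    rw [integral_undef h] at hdens
    exact zero_ne_one hdens
  have hmono : MonotoneOn (fun y => exp (-ψ y)) (Icc c (2 * c)) :=
    fun x hx y hy hxy => exp_le_exp.2 (neg_le_neg (hψ hx hy hxy))
  have hmass : c * exp (-ψ c) ≤ 1 :=
    calc c * exp (-ψ c) = (2 * c - c) * exp (-ψ c) := by ring
      _ ≤ ∫ y in Ioc c (2 * c), exp (-ψ y) := hmono.mul_le_setIntegral_Ioc (by linarith)
      _ ≤ ∫ y in Ioi 0, exp (-ψ y) :=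
          setIntegral_mono_set hint (ae_of_all _ fun y => (exp_pos _).le)
            (ae_of_all _ fun y (hy : y ∈ Ioc c (2 * c)) => hc.trans hy.1)
      _ = 1 := hdens
  rw [← mul_one c⁻¹, le_inv_mul_iff₀ hc]
  exact hmass

lemma abs_log_le_sq_mul_inv_pow_three {y c : ℝ} (hy : 0 < y) (hyc : y ≤ c) (hc : c ≤ 1) :
    |log y| ≤ c ^ 2 * y⁻¹ ^ 3 := by
  have hlog : |log y| * y < 1 := by
    simpa [abs_mul, abs_of_pos hy] using abs_log_mul_self_lt y hy (hyc.trans hc)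
  calc |log y| ≤ y⁻¹ := by
        rw [← mul_one y⁻¹, le_inv_mul_iff₀' hy]
        exact hlog.le
    _ = y ^ 2 * y⁻¹ ^ 3 := by field_simp
    _ ≤ c ^ 2 * y⁻¹ ^ 3 := by gcongr

lemma integral_abs_log_mul_exp_neg_le {ψ : ℝ → ℝ} {β a c : ℝ}
    (hψ : DifferentiableOn ℝ ψ (Ioi 0)) (hβ : 0 < β) (ha : 0 < a) (hac : a ≤ c) (hc : c ≤ 1)
    (hderiv : ∀ y ∈ Ioo a c, deriv ψ y ≤ -(β * y⁻¹ ^ 3)) :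
    ∫ y in Ioo a c, |log y| * exp (-ψ y) ≤ β⁻¹ * c ^ 2 * exp (-ψ c) := by
  have hsub : Icc a c ⊆ Ioi 0 := fun y hy => ha.trans_le hy.1
  have hcont : ContinuousOn (fun y => exp (-ψ y)) (Icc a c) :=
    (hψ.continuousOn.mono hsub).neg.rexp
  have hφ : IntegrableOn (fun y => |log y| * exp (-ψ y)) (Icc a c) :=
    ((continuousOn_log.mono fun y hy => (hsub hy).ne').abs.mul hcont).integrableOn_Icc
  have hpt : ∀ y ∈ Ioo a c,
      |log y| * exp (-ψ y) ≤ β⁻¹ * c ^ 2 * (exp (-ψ y) * -deriv ψ y) := fun y hy =>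
    calc |log y| * exp (-ψ y) ≤ c ^ 2 * y⁻¹ ^ 3 * exp (-ψ y) := by
          gcongr
          exact abs_log_le_sq_mul_inv_pow_three (ha.trans hy.1) hy.2.le hc
      _ = β⁻¹ * c ^ 2 * (exp (-ψ y) * (β * y⁻¹ ^ 3)) := by field_simp
      _ ≤ β⁻¹ * c ^ 2 * (exp (-ψ y) * -deriv ψ y) := by
          gcongr
          linarith [hderiv y hy]
  have hle := intervalIntegral.integral_le_sub_of_hasDeriv_right_of_le hac
    (g := fun y => β⁻¹ * c ^ 2 * exp (-ψ y)) (continuousOn_const.mul hcont)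
    (fun y hy => (((hψ.differentiableAt (Ioi_mem_nhds (ha.trans hy.1))).hasDerivAt.neg.exp
      ).const_mul _).hasDerivWithinAt) hφ hpt
  rw [intervalIntegral.integral_of_le hac, integral_Ioc_eq_integral_Ioo] at hle
  have : 0 ≤ β⁻¹ * c ^ 2 * exp (-ψ a) := by positivity
  linarith

/-- If `e^{-ψ}` is a probability density on `(0,∞)`, `ψ` is continuously differentiable there,
`β ≥ 1`, and `ψ'(y) ≤ -β y⁻³` for `0 < y ≤ β⁻¹`, then
`∫_0^{(2β)⁻¹} |log y| e^{-ψ(y)} dy ≤ β⁻²/2`. -/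
theorem stmt_2 (ψ : ℝ → ℝ) (β : ℝ) (hβ : 1 ≤ β)
    (hsmooth : ContDiffOn ℝ 1 ψ (Ioi 0))
    (hdens : ∫ y in Ioi (0 : ℝ), Real.exp (-ψ y) = 1)
    (hderiv : ∀ y : ℝ, 0 < y → y ≤ β⁻¹ → deriv ψ y ≤ -(β * (y⁻¹ ^ 3))) :
    ∫ y in Ioo (0 : ℝ) (2 * β)⁻¹, |Real.log y| * Real.exp (-ψ y) ≤ β⁻¹ ^ 2 / 2 := by
  have hβ0 : 0 < β := by linarith
  have hψ : DifferentiableOn ℝ ψ (Ioi 0) := hsmooth.differentiableOn one_ne_zero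
  set c := (2 * β)⁻¹ with hc
  have hc0 : 0 < c := by positivity
  have hcβ : 2 * c = β⁻¹ := by rw [hc]; field_simp
  have hc1 : c ≤ 1 := by rw [hc]; exact inv_le_one_of_one_le₀ (by linarith)
  have hanti : AntitoneOn ψ (Ioc 0 β⁻¹) := antitoneOn_Ioc_of_deriv_nonpos hψ fun y hy =>
    (hderiv y hy.1 hy.2.le).trans (neg_nonpos.2 (by have := hy.1; positivity))
  have hmass : exp (-ψ c) ≤ 2 * β := by
    simpa [hc] using exp_neg_le_inv_of_antitoneOn hc0 hdens
      (hanti.mono fun y hy => ⟨hc0.trans_le hy.1, hcβ ▸ hy.2⟩)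
  refine setIntegral_Ioo_le_of_forall_Ioo hc0 (by positivity) fun a ha => ?_
  calc ∫ y in Ioo a c, |log y| * exp (-ψ y) ≤ β⁻¹ * c ^ 2 * exp (-ψ c) :=
        integral_abs_log_mul_exp_neg_le hψ hβ0 ha.1 ha.2.le hc1
          fun y hy => hderiv y (ha.1.trans hy.1) (by linarith [hy.2])
    _ ≤ β⁻¹ * c ^ 2 * (2 * β) := by gcongr
    _ = β⁻¹ ^ 2 / 2 := by rw [hc]; field_simp
end

section
/- Let $A$ be a symmetric block tridiagonal matrix with blocks $A_{i,j} \in \mathbb{R}^{M\times M}$, and let $(D_k)_{k=1}^N$ and $(B_k)_{k=1}^{N-1}$ be matrices in $\mathbb{R}^{M\times M}$ defined recursively by $D_1 = A_{1,1} - \lambda$, $B_k = -A_{k,k+1}$, $D_{k+1} = A_{k+1,k+1} - \lambda - B_k^* D_k^{-1} B_k$, where all the matrices $D_k$ are invertible. Then $((A - \lambda I)^{-1})_{1,N} = D_1^{-1}B_1 D_2^{-1}B_2 \cdots D_{N-1}^{-1}B_{N-1}D_N^{-1}$, where $((A-\lambda I)^{-1})_{1,N}$ denotes the top-right $M \times M$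 block of the inverse. -/
open Matrix

/-- The `(i,j)` block of a matrix indexed by `Fin N × Fin M`. -/
def blk {N M : ℕ} (A : Matrix (Fin N × Fin M) (Fin N × Fin M) ℝ) (i j : Fin N) :
    Matrix (Fin M) (Fin M) ℝ :=
  Matrix.of fun a b => A (i, a) (j, b)

lemma tri_sum {α : Type*} [AddCommMonoid α] (N i : ℕ) (hi : i < N) (g : ℕ → α)
    (h0 : ∀ j, j < N → (i + 1 < j ∨ j + 1 < i) → g j = 0) :
    ∑ j ∈ Finset.range N, g j =
      (if 0 < i then g (i - 1) else 0) + g i + (if i + 1 < N then g (i + 1) else 0) := by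
  have hlow : ∑ j ∈ Finset.range i, g j = if 0 < i then g (i - 1) else 0 := by
    rcases Nat.eq_zero_or_pos i with h | h
    · simp [h]
    · have hi' : i = (i - 1) + 1 := by omega
      rw [hi', Finset.sum_range_succ]
      rw [Finset.sum_eq_zero fun j hj => h0 j (by simp at hj; omega)
        (by simp at hj; omega)]
      simp [← hi', h]
  have hsplit := Finset.sum_range_add_sum_Ico g (Nat.succ_le_of_lt hi)
  rw [← hsplit, Finset.sum_range_succ, hlow]
  congr 1
  by_cases h : i + 1 < N
  · rw [Finset.sum_eq_sum_Ico_succ_bot h, if_pos h,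
      Finset.sum_eq_zero fun j hj => h0 j (by simp [Finset.mem_Ico] at hj; omega)
        (by simp [Finset.mem_Ico] at hj; omega), add_zero]
  · rw [if_neg h, Finset.Ico_eq_empty (by omega), Finset.sum_empty]

lemma blk_sub {N M : ℕ} (P Q : Matrix (Fin N × Fin M) (Fin N × Fin M) ℝ) (i j : Fin N) :
    blk (P - Q) i j = blk P i j - blk Q i j := rfl

lemma blk_smul_one {N M : ℕ} (lam : ℝ) (i j : Fin N) :
    blk (lam • (1 : Matrix (Fin N × Fin M) (Fin N × Fin M) ℝ)) i j
      = if i = j then lam • (1 : Matrix (Fin M) (Fin M) ℝ) else 0 := by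
  ext a b
  simp only [blk, Matrix.of_apply, Matrix.smul_apply, Matrix.one_apply, Prod.mk.injEq,
    smul_eq_mul]
  by_cases hij : i = j
  · subst hij
    by_cases hab : a = b <;> simp [hab, Matrix.one_apply]
  · simp [hij]

lemma blk_transpose {N M : ℕ} (P : Matrix (Fin N × Fin M) (Fin N × Fin M) ℝ) (i j : Fin N) :
    blk Pᵀ i j = (blk P j i)ᵀ := rfl

/-- Schur-complement / Gaussian-elimination formula for the top-right block of the resolvent
of a symmetric block tridiagonal matrix:
`((A - λ)⁻¹)_{1,N} = D₁⁻¹ B₁ D₂⁻¹ B₂ ⋯ D_{N-1}⁻¹ B_{N-1} D_N⁻¹`. -/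
theorem stmt_8 (N M : ℕ) (hN : 0 < N) (lam : ℝ)
    (A : Matrix (Fin N × Fin M) (Fin N × Fin M) ℝ)
    (hsym : Aᵀ = A)
    (htri : ∀ i j : Fin N, (i.val + 1 < j.val ∨ j.val + 1 < i.val) → blk A i j = 0)
    (D B : ℕ → Matrix (Fin M) (Fin M) ℝ)
    (hD1 : D 0 = blk A ⟨0, hN⟩ ⟨0, hN⟩ - lam • 1)
    (hB : ∀ k, (hk : k + 1 < N) →
      B k = -(blk A ⟨k, Nat.lt_of_succ_lt hk⟩ ⟨k + 1, hk⟩))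
    (hDrec : ∀ k, (hk : k + 1 < N) →
      D (k + 1) = blk A ⟨k + 1, hk⟩ ⟨k + 1, hk⟩ - lam • 1 - (B k)ᵀ * (D k)⁻¹ * B k)
    (hinv : ∀ k, k < N → IsUnit (D k)) :
    blk (A - lam • 1)⁻¹ ⟨0, hN⟩ ⟨N - 1, by omega⟩
      = ((List.range (N - 1)).map (fun k => (D k)⁻¹ * B k)).prod * (D (N - 1))⁻¹ := by
  set T : Matrix (Fin N × Fin M) (Fin N × Fin M) ℝ := A - lam • 1 with hTdef
  -- unit facts
  have hdet : ∀ k, k < N → IsUnit (D k).det :=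
    fun k hk => (Matrix.isUnit_iff_isUnit_det _).1 (hinv k hk)
  have hDu : ∀ k, k < N → D k * (D k)⁻¹ = 1 := fun k hk => Matrix.mul_nonsing_inv _ (hdet k hk)
  have hDu' : ∀ k, k < N → (D k)⁻¹ * D k = 1 := fun k hk => Matrix.nonsing_inv_mul _ (hdet k hk)
  -- block structure of T
  have hAsym : ∀ i j : Fin N, blk A j i = (blk A i j)ᵀ := by
    intro i j
    have := blk_transpose A j i
    rw [hsym] at this
    rw [← this]
  have hT0 : ∀ i j : Fin N, (i.val + 1 < j.val ∨ j.val + 1 < i.val) → blk T i j = 0 := by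
    intro i j hij
    have hne : i ≠ j := by
      intro h; subst h; omega
    rw [hTdef, blk_sub, htri i j hij, blk_smul_one, if_neg hne, sub_zero]
  have hTd : ∀ (i : ℕ) (h : i < N), blk T ⟨i, h⟩ ⟨i, h⟩ = blk A ⟨i, h⟩ ⟨i, h⟩ - lam • 1 := by
    intro i h
    rw [hTdef, blk_sub, blk_smul_one, if_pos rfl]
  have hTu : ∀ (k : ℕ) (hk : k + 1 < N),
      blk T ⟨k, Nat.lt_of_succ_lt hk⟩ ⟨k + 1, hk⟩ = -(B k) := by
    intro k hk
    have hne : (⟨k, Nat.lt_of_succ_lt hk⟩ : Fin N) ≠ ⟨k + 1, hk⟩ := by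
      intro h
      have := Fin.mk.injEq .. ▸ h
      omega
    rw [hTdef, blk_sub, blk_smul_one, if_neg hne, sub_zero, hB k hk, neg_neg]
  have hTl : ∀ (k : ℕ) (hk : k + 1 < N),
      blk T ⟨k + 1, hk⟩ ⟨k, Nat.lt_of_succ_lt hk⟩ = -(B k)ᵀ := by
    intro k hk
    have hne : (⟨k + 1, hk⟩ : Fin N) ≠ ⟨k, Nat.lt_of_succ_lt hk⟩ := by
      intro h
      have := Fin.mk.injEq .. ▸ h
      omega
    rw [hTdef, blk_sub, blk_smul_one, if_neg hne, sub_zero,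
      hAsym ⟨k, Nat.lt_of_succ_lt hk⟩ ⟨k + 1, hk⟩, hB k hk, Matrix.transpose_neg, neg_neg]
  -- the candidate blocks of the last block-column of the inverse
  set f : ℕ → Matrix (Fin M) (Fin M) ℝ := fun k => (D k)⁻¹ * B k with hf
  set Xn : ℕ → Matrix (Fin M) (Fin M) ℝ :=
    fun i => ((List.range' i (N - 1 - i)).map f).prod * (D (N - 1))⁻¹ with hXn
  have hXlast : Xn (N - 1) = (D (N - 1))⁻¹ := by
    simp [hXn]
  have hXstep : ∀ i, i + 1 < N → Xn i = (D i)⁻¹ * B i * Xn (i + 1) := by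
    intro i hik
    have h1 : N - 1 - i = (N - 1 - (i + 1)) + 1 := by omega
    rw [hXn]
    simp only [h1, List.range'_succ, List.map_cons, List.prod_cons, hf, mul_assoc]
  have hX0 : Xn 0 = ((List.range (N - 1)).map f).prod * (D (N - 1))⁻¹ := by
    rw [hXn]
    simp [List.range_eq_range']
  have hDX : ∀ k, k + 1 < N → D k * Xn k = B k * Xn (k + 1) := by
    intro k hk
    rw [hXstep k hk, mul_assoc ((D k)⁻¹) (B k) (Xn (k + 1)),
      ← mul_assoc (D k) ((D k)⁻¹) (B k * Xn (k + 1)), hDu k (Nat.lt_of_succ_lt hk), one_mul]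
  have hDXlast : D (N - 1) * Xn (N - 1) = 1 := by
    rw [hXlast, hDu (N - 1) (by omega)]
  -- the key row identity
  have hrow : ∀ (i : ℕ) (hi : i < N),
      (∑ k ∈ Finset.range N,
        (if h : k < N then blk T ⟨i, hi⟩ ⟨k, h⟩ * Xn k else 0))
        = if i = N - 1 then (1 : Matrix (Fin M) (Fin M) ℝ) else 0 := by
    intro i hi
    have hz : ∀ j, j < N → (i + 1 < j ∨ j + 1 < i) →
        (if h : j < N then blk T ⟨i, hi⟩ ⟨j, h⟩ * Xn j else 0) = 0 := by
      intro j hj hcond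
      rw [dif_pos hj, hT0 ⟨i, hi⟩ ⟨j, hj⟩ hcond, zero_mul]
    rw [tri_sum N i hi _ hz, dif_pos hi]
    by_cases h1 : 0 < i
    · obtain ⟨p, rfl⟩ : ∃ p, i = p + 1 := ⟨i - 1, by omega⟩
      have hp : p < N := by omega
      have hps : p + 1 < N := hi
      simp only [Nat.add_sub_cancel, if_pos h1, dif_pos hp]
      have c1 : (B p)ᵀ * (D p)⁻¹ * B p * Xn (p + 1) = (B p)ᵀ * Xn p := by
        rw [hXstep p hps]
        simp [mul_assoc]
      have hDexp : blk A ⟨p + 1, hps⟩ ⟨p + 1, hps⟩ - lam • 1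
          = D (p + 1) + (B p)ᵀ * (D p)⁻¹ * B p := by
        rw [hDrec p hps]; abel
      by_cases h2 : p + 1 + 1 < N
      · rw [if_pos h2, dif_pos h2, if_neg (by omega : ¬ p + 1 = N - 1)]
        rw [hTl p hps, hTd (p + 1) hps, hTu (p + 1) h2, hDexp, add_mul, c1,
          hDX (p + 1) h2, neg_mul, neg_mul]
        abel
      · have hlast : p + 1 = N - 1 := by omega
        rw [if_neg h2, if_pos hlast, add_zero]
        rw [hTl p hps, hTd (p + 1) hps, hDexp, add_mul, c1, hlast, hDXlast, neg_mul]
        abel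
    · obtain rfl : i = 0 := by omega
      simp only [if_neg h1, zero_add]
      have hblk00 : blk T ⟨0, hi⟩ ⟨0, hi⟩ = D 0 := by
        rw [hTd 0 hi, ← hD1]
      by_cases h2 : 0 + 1 < N
      · rw [if_pos h2, dif_pos h2, if_neg (by omega : ¬ 0 = N - 1)]
        rw [hblk00, hTu 0 h2, hDX 0 h2, neg_mul]
        abel
      · have hlast : 0 = N - 1 := by omega
        rw [if_neg h2, if_pos hlast, add_zero, hblk00, hlast, hDXlast]
  -- candidate last block-column and its target
  set Y : Matrix (Fin N × Fin M) (Fin M) ℝ :=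
    Matrix.of fun p b => Xn p.1.val p.2 b with hYdef
  set E : Matrix (Fin N × Fin M) (Fin M) ℝ :=
    Matrix.of fun p b => if p.1.val = N - 1 then (1 : Matrix (Fin M) (Fin M) ℝ) p.2 b else 0
    with hEdef
  have hTY : T * Y = E := by
    ext ⟨⟨i, hi⟩, a⟩ b
    rw [Matrix.mul_apply, Fintype.sum_prod_type]
    have h1 : ∀ k : Fin N, ∑ c : Fin M, T (⟨i, hi⟩, a) (k, c) * Y (k, c) b
        = (blk T ⟨i, hi⟩ k * Xn k.val) a b := by
      intro k
      rw [Matrix.mul_apply]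
      rfl
    rw [Finset.sum_congr rfl fun k _ => h1 k]
    have h2 : ∑ k : Fin N, (blk T ⟨i, hi⟩ k * Xn k.val) a b
        = ∑ k ∈ Finset.range N,
            (fun k => if h : k < N then (blk T ⟨i, hi⟩ ⟨k, h⟩ * Xn k) a b else 0) k := by
      rw [← Fin.sum_univ_eq_sum_range]
      exact Finset.sum_congr rfl fun k _ => by simp [k.isLt]
    rw [h2]
    have h3 : ∑ k ∈ Finset.range N,
          (fun k => if h : k < N then (blk T ⟨i, hi⟩ ⟨k, h⟩ * Xn k) a b else 0) k
        = (∑ k ∈ Finset.range N,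
            (if h : k < N then blk T ⟨i, hi⟩ ⟨k, h⟩ * Xn k else 0)) a b := by
      rw [Matrix.sum_apply]
      refine Finset.sum_congr rfl fun k _ => ?_
      by_cases h : k < N
      · simp only [dif_pos h]
      · simp only [dif_neg h, Matrix.zero_apply]
    rw [h3, hrow i hi]
    by_cases h : i = N - 1
    · rw [if_pos h]
      simp [hEdef, h]
    · rw [if_neg h]
      simp [hEdef, h]
  -- kernel of T is trivial
  have hker : ∀ x : Fin N × Fin M → ℝ, T *ᵥ x = 0 → x = 0 := by
    intro x hx
    set xb : ℕ → (Fin M → ℝ) :=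
      fun j => if h : j < N then (fun b => x (⟨j, h⟩, b)) else 0 with hxb
    have hrowv : ∀ (i : ℕ) (hi : i < N),
        (if 0 < i then
            (if h : i - 1 < N then blk T ⟨i, hi⟩ ⟨i - 1, h⟩ *ᵥ xb (i - 1) else 0) else 0)
          + (if h : i < N then blk T ⟨i, hi⟩ ⟨i, h⟩ *ᵥ xb i else 0)
          + (if i + 1 < N then
              (if h : i + 1 < N then blk T ⟨i, hi⟩ ⟨i + 1, h⟩ *ᵥ xb (i + 1) else 0) else 0)
          = 0 := by
      intro i hi
      have hz : ∀ j, j < N → (i + 1 < j ∨ j + 1 < i) →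
          (if h : j < N then blk T ⟨i, hi⟩ ⟨j, h⟩ *ᵥ xb j else 0) = 0 := by
        intro j hj hcond
        rw [dif_pos hj, hT0 ⟨i, hi⟩ ⟨j, hj⟩ hcond, Matrix.zero_mulVec]
      rw [← tri_sum N i hi _ hz]
      funext a
      have hxa := congrFun hx (⟨i, hi⟩, a)
      simp only [Matrix.mulVec, dotProduct, Pi.zero_apply] at hxa
      rw [Fintype.sum_prod_type] at hxa
      rw [Finset.sum_apply]
      refine Eq.trans ?_ hxa
      have hcg : ∀ j ∈ Finset.range N,
          (if h : j < N then blk T ⟨i, hi⟩ ⟨j, h⟩ *ᵥ xb j else 0) a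
            = (fun j => if h : j < N then
                ∑ c : Fin M, T (⟨i, hi⟩, a) (⟨j, h⟩, c) * x (⟨j, h⟩, c) else 0) j := by
        intro j hj
        rw [Finset.mem_range] at hj
        simp only [dif_pos hj]
        simp [Matrix.mulVec, dotProduct, blk, hxb, dif_pos hj]
      rw [Finset.sum_congr rfl hcg,
        ← Fin.sum_univ_eq_sum_range (fun j => if h : j < N then
            ∑ c : Fin M, T (⟨i, hi⟩, a) (⟨j, h⟩, c) * x (⟨j, h⟩, c) else 0) N]
      refine Finset.sum_congr rfl fun k _ => ?_
      simp [k.isLt]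
    have hfwd : ∀ i, i < N →
        D i *ᵥ xb i = (if h : i + 1 < N then B i *ᵥ xb (i + 1) else 0) := by
      intro i
      induction i with
      | zero =>
        intro hi
        have h := hrowv 0 hi
        rw [if_neg (lt_irrefl 0), dif_pos hi, zero_add] at h
        have hblk00 : blk T ⟨0, hi⟩ ⟨0, hi⟩ = D 0 := by rw [hTd 0 hi, ← hD1]
        rw [hblk00] at h
        by_cases h2 : 0 + 1 < N
        · rw [if_pos h2, dif_pos h2, hTu 0 h2, Matrix.neg_mulVec,
            ← sub_eq_add_neg] at h
          rw [dif_pos h2]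
          exact sub_eq_zero.mp h
        · rw [if_neg h2, add_zero] at h
          rw [dif_neg h2]
          exact h
      | succ p ih =>
        intro hs
        have hp : p < N := Nat.lt_of_succ_lt hs
        have ihp := ih hp
        rw [dif_pos hs] at ihp
        have hxp : xb p = ((D p)⁻¹ * B p) *ᵥ xb (p + 1) := by
          calc xb p = (D p)⁻¹ *ᵥ (D p *ᵥ xb p) := by
                rw [Matrix.mulVec_mulVec, hDu' p hp, Matrix.one_mulVec]
            _ = (D p)⁻¹ *ᵥ (B p *ᵥ xb (p + 1)) := by rw [ihp]
            _ = ((D p)⁻¹ * B p) *ᵥ xb (p + 1) := Matrix.mulVec_mulVec ..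
        have hDexp : blk A ⟨p + 1, hs⟩ ⟨p + 1, hs⟩ - lam • 1
            = D (p + 1) + (B p)ᵀ * ((D p)⁻¹ * B p) := by
          rw [hDrec p hs, mul_assoc]
          abel
        have h := hrowv (p + 1) hs
        rw [if_pos (Nat.succ_pos p), Nat.add_sub_cancel, dif_pos hp, dif_pos hs,
          hTl p hs, hTd (p + 1) hs, hDexp, Matrix.neg_mulVec, hxp,
          Matrix.mulVec_mulVec, Matrix.add_mulVec] at h
        by_cases h2 : p + 1 + 1 < N
        · rw [if_pos h2, dif_pos h2, hTu (p + 1) h2, Matrix.neg_mulVec] at h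
          rw [dif_pos h2]
          have h' : D (p + 1) *ᵥ xb (p + 1) - B (p + 1) *ᵥ xb (p + 1 + 1)
              = -(((B p)ᵀ * ((D p)⁻¹ * B p)) *ᵥ xb (p + 1))
                + (D (p + 1) *ᵥ xb (p + 1) + ((B p)ᵀ * ((D p)⁻¹ * B p)) *ᵥ xb (p + 1))
                + -(B (p + 1) *ᵥ xb (p + 1 + 1)) := by abel
          exact sub_eq_zero.mp (h'.trans h)
        · rw [if_neg h2, add_zero] at h
          rw [dif_neg h2]
          have h' : D (p + 1) *ᵥ xb (p + 1)
              = -(((B p)ᵀ * ((D p)⁻¹ * B p)) *ᵥ xb (p + 1))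
                + (D (p + 1) *ᵥ xb (p + 1) + ((B p)ᵀ * ((D p)⁻¹ * B p)) *ᵥ xb (p + 1)) := by
            abel
          exact h'.trans h
    have hcancel : ∀ i, i < N → D i *ᵥ xb i = 0 → xb i = 0 := by
      intro i hi h
      calc xb i = (D i)⁻¹ *ᵥ (D i *ᵥ xb i) := by
            rw [Matrix.mulVec_mulVec, hDu' i hi, Matrix.one_mulVec]
        _ = 0 := by rw [h, Matrix.mulVec_zero]
    have hzero : ∀ j, xb (N - 1 - j) = 0 := by
      intro j
      induction j with
      | zero => 
        refine hcancel (N - 1) (by omega) ?_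
        have h := hfwd (N - 1) (by omega)
        rw [dif_neg (by omega : ¬ (N - 1 + 1 < N))] at h
        simpa using h
      | succ p ih =>
        by_cases h : N - 1 - (p + 1) = N - 1 - p
        · rw [h]; exact ih
        · have hlt : N - 1 - (p + 1) + 1 = N - 1 - p := by omega
          refine hcancel (N - 1 - (p + 1)) (by omega) ?_
          have h2 := hfwd (N - 1 - (p + 1)) (by omega)
          rw [dif_pos (by omega : N - 1 - (p + 1) + 1 < N), hlt, ih,
            Matrix.mulVec_zero] at h2
          exact h2
    funext q
    obtain ⟨⟨k, hk⟩, c⟩ := q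
    have h0 := hzero (N - 1 - k)
    rw [(by omega : N - 1 - (N - 1 - k) = k)] at h0
    have := congrFun h0 c
    simpa [hxb, dif_pos hk] using this
  -- T is invertible
  have hdetT : IsUnit T.det := by
    rw [isUnit_iff_ne_zero]
    intro h0
    obtain ⟨v, hv0, hv⟩ := Matrix.exists_mulVec_eq_zero_iff.mpr h0
    exact hv0 (hker v hv)
  have hYinv : Y = T⁻¹ * E := by
    calc Y = (T⁻¹ * T) * Y := by rw [Matrix.nonsing_inv_mul T hdetT, Matrix.one_mul]
      _ = T⁻¹ * (T * Y) := by rw [Matrix.mul_assoc]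
      _ = T⁻¹ * E := by rw [hTY]
  -- conclusion
  have hNlt : N - 1 < N := by omega
  rw [← hX0]
  ext a b
  have hextract : (T⁻¹ * E) (⟨0, hN⟩, a) b = T⁻¹ (⟨0, hN⟩, a) (⟨N - 1, hNlt⟩, b) := by
    rw [Matrix.mul_apply, Fintype.sum_prod_type]
    have hinner : ∀ k : Fin N, ∑ c : Fin M, T⁻¹ (⟨0, hN⟩, a) (k, c) * E (k, c) b
        = if k = (⟨N - 1, hNlt⟩ : Fin N) then T⁻¹ (⟨0, hN⟩, a) (k, b) else 0 := by
      intro k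
      by_cases hkk : k = (⟨N - 1, hNlt⟩ : Fin N)
      · subst hkk
        rw [if_pos rfl]
        simp [hEdef, Matrix.one_apply, mul_ite, mul_one, mul_zero]
      · rw [if_neg hkk]
        refine Finset.sum_eq_zero fun c _ => ?_
        have hE0 : E (k, c) b = 0 := by
          have : ¬ (k.val = N - 1) := fun h => hkk (Fin.eq_of_val_eq h)
          simp [hEdef, this]
        rw [hE0, mul_zero]
    rw [Finset.sum_congr rfl fun k _ => hinner k, Finset.sum_ite_eq' Finset.univ]
    simp
  calc blk T⁻¹ ⟨0, hN⟩ ⟨N - 1, by omega⟩ a b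
      = T⁻¹ (⟨0, hN⟩, a) (⟨N - 1, hNlt⟩, b) := rfl
    _ = (T⁻¹ * E) (⟨0, hN⟩, a) b := hextract.symm
    _ = Y (⟨0, hN⟩, a) b := by rw [← hYinv]
    _ = Xn 0 a b := rfl
end

section
/- Let $\alpha_1, \dots, \alpha_7$ be real numbers with $\alpha_1, \alpha_2, \alpha_4, \alpha_5, \alpha_7 \in [M^{2-\varepsilon}, M^{3+\varepsilon}]$, $\alpha_1, \alpha_4, \alpha_7 \leq M^{2+\varepsilon}$, and $|\alpha_3|, |\alpha_6| \leq M^{3/2+\varepsilon}$, where $0 < \varepsilon < 1/8$ and $M \geq C_\varepsilon$ is sufficiently large. Define $g(s) = 2\alpha_1 s + 2\alpha_2(s-1) - 4\alpha_3 s + 2\alpha_5(s^{-2} - s^{-3}) - 2\alpha_6 s^{-2} - \alpha_7 s^{-1}$ for $s > 0$. Then $g(s) \geq M^{2-2\varepsilon} s$ for all $s \geq M^{2\varepsilon}$, and $g(s) \leq -M^{2-2\varepsilon}s^{-3}$ for all $0 < s \leq M^{-2\varepsilon}$. -/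
set_option maxHeartbeats 1000000


/-- Core elementary inequality for the log-density derivative bounds (Lemma 3.3). -/
theorem stmt_11 (ε : ℝ) (hε : 0 < ε) (hε' : ε < 1/8) :
    ∃ C : ℝ, ∀ M : ℝ, C ≤ M →
      ∀ α₁ α₂ α₃ α₄ α₅ α₆ α₇ : ℝ,
        M ^ (2 - ε) ≤ α₁ → α₁ ≤ M ^ (2 + ε) →
        M ^ (2 - ε) ≤ α₂ → α₂ ≤ M ^ (3 + ε) →
        |α₃| ≤ M ^ (3/2 + ε) →
        M ^ (2 - ε) ≤ α₄ → α₄ ≤ M ^ (2 + ε) →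
        M ^ (2 - ε) ≤ α₅ → α₅ ≤ M ^ (3 + ε) →
        |α₆| ≤ M ^ (3/2 + ε) →
        M ^ (2 - ε) ≤ α₇ → α₇ ≤ M ^ (2 + ε) →
        (∀ s : ℝ, M ^ (2 * ε) ≤ s →
            M ^ (2 - 2 * ε) * s ≤
              2 * α₁ * s + 2 * α₂ * (s - 1) - 4 * α₃ * s
                + 2 * α₅ * (s⁻¹ ^ 2 - s⁻¹ ^ 3) - 2 * α₆ * s⁻¹ ^ 2 - α₇ * s⁻¹) ∧
        (∀ s : ℝ, 0 < s → s ≤ M ^ (-(2 * ε)) →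
            2 * α₁ * s + 2 * α₂ * (s - 1) - 4 * α₃ * s
                + 2 * α₅ * (s⁻¹ ^ 2 - s⁻¹ ^ 3) - 2 * α₆ * s⁻¹ ^ 2 - α₇ * s⁻¹
              ≤ -(M ^ (2 - 2 * ε) * s⁻¹ ^ 3)) := by
  refine ⟨max ((12:ℝ)^(4:ℕ)) ((12:ℝ) ^ ((1:ℝ)/ε)), fun M hM α₁ α₂ α₃ α₄ α₅ α₆ α₇
    h₁l h₁u h₂l h₂u h₃ h₄l h₄u h₅l h₅u h₆ h₇l h₇u => ?_⟩
  have hM4 : (12:ℝ)^(4:ℕ) ≤ M := le_trans (le_max_left _ _) hM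
  have hM1 : (1:ℝ) < M := by norm_num at hM4; linarith
  have hM0 : (0:ℝ) < M := lt_trans one_pos hM1
  -- M^ε ≥ 12
  have hMε12 : (12:ℝ) ≤ M ^ ε := by
    have h := Real.rpow_le_rpow (by positivity) (le_trans (le_max_right _ _) hM) hε.le
    rwa [← Real.rpow_mul (by norm_num : (0:ℝ) ≤ 12), one_div,
      inv_mul_cancel₀ hε.ne', Real.rpow_one] at h
  -- M^(1/2 - 2ε) ≥ 12
  have hq : (12:ℝ) ≤ M ^ (1/2 - 2*ε) := by
    have hx : (1:ℝ) ≤ (1/2 - 2*ε) * 4 := by linarith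
    have h1 : M ≤ M ^ ((1/2 - 2*ε) * 4) := by
      nth_rewrite 1 [← Real.rpow_one M]
      exact Real.rpow_le_rpow_of_exponent_le hM1.le hx
    have h2 : M ^ ((1/2 - 2*ε) * 4) = (M ^ (1/2 - 2*ε)) ^ (4:ℕ) := by
      rw [Real.rpow_mul hM0.le, ← Real.rpow_natCast (M ^ (1/2 - 2*ε)) 4]
      norm_num
    refine le_of_pow_le_pow_left₀ (n := 4) (by norm_num) (Real.rpow_nonneg hM0.le _) ?_
    rw [← h2]; exact le_trans hM4 h1
  set A := M ^ (2 - ε) with hA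
  set B := M ^ (2 + ε) with hB
  set D := M ^ (3/2 + ε) with hD
  set E := M ^ (2 * ε) with hEdef
  set G := M ^ (2 - 2 * ε) with hG
  have A0 : 0 < A := Real.rpow_pos_of_pos hM0 _
  have B0 : 0 < B := Real.rpow_pos_of_pos hM0 _
  have D0 : 0 < D := Real.rpow_pos_of_pos hM0 _
  have E0 : 0 < E := Real.rpow_pos_of_pos hM0 _
  have G0 : 0 < G := Real.rpow_pos_of_pos hM0 _
  have hAD : D * M ^ (1/2 - 2*ε) = A := by
    rw [hD, hA, ← Real.rpow_add hM0]; ring_nf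
  have hDA : 12 * D ≤ A := by
    calc 12 * D = D * 12 := by ring
    _ ≤ D * M ^ (1/2 - 2*ε) := mul_le_mul_of_nonneg_left hq D0.le
    _ = A := hAD
  have hBAE : B = A * E := by
    rw [hB, hA, hEdef, ← Real.rpow_add hM0]; ring_nf
  have hAGε : A = G * M ^ ε := by
    rw [hA, hG, ← Real.rpow_add hM0]; ring_nf
  have hGA : 12 * G ≤ A := by
    rw [hAGε]
    calc 12 * G = G * 12 := by ring
    _ ≤ G * M ^ ε := mul_le_mul_of_nonneg_left hMε12 G0.le
  have hEE : E = M ^ ε * M ^ ε := by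
    rw [hEdef, ← Real.rpow_add hM0]; ring_nf
  have hE144 : (144:ℝ) ≤ E := by
    have h := mul_le_mul hMε12 hMε12 (by norm_num) (by linarith : (0:ℝ) ≤ M ^ ε)
    rw [hEE]; linarith
  have hα₃D : α₃ ≤ D := le_trans (le_abs_self α₃) h₃
  have hα₃D' : -α₃ ≤ D := by have := neg_abs_le α₃; linarith
  have hα₆D : α₆ ≤ D := le_trans (le_abs_self α₆) h₆
  have hα₆D' : -α₆ ≤ D := by have := neg_abs_le α₆; linarith
  constructor
  · -- Case s ≥ M^(2ε)
    intro s hs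
    have hs1 : (1:ℝ) ≤ s := by linarith
    have hs0 : (0:ℝ) < s := by linarith
    have hsinv1 : s⁻¹ ≤ 1 := inv_le_one_of_one_le₀ hs1
    have hsinv0 : (0:ℝ) ≤ s⁻¹ := by positivity
    have hsinvE : s⁻¹ ≤ E⁻¹ := inv_anti₀ E0 hs
    have h1 : 2 * (A * s) ≤ 2 * (α₁ * s) := by
      have := mul_le_mul_of_nonneg_right h₁l hs0.le; linarith
    have h2 : 0 ≤ 2 * α₂ * (s - 1) :=
      mul_nonneg (by linarith) (by linarith)
    have h3 : α₃ * s ≤ D * s := mul_le_mul_of_nonneg_right hα₃D hs0.le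
    have h4 : 0 ≤ 2 * α₅ * (s⁻¹ ^ 2 - s⁻¹ ^ 3) := by
      have hcube : s⁻¹ ^ 3 ≤ s⁻¹ ^ 2 :=
        pow_le_pow_of_le_one hsinv0 hsinv1 (by norm_num)
      exact mul_nonneg (by linarith) (by linarith)
    have h5 : α₆ * s⁻¹ ^ 2 ≤ D * s := by
      have hsq : s⁻¹ ^ 2 ≤ s := by
        have h1 : s⁻¹ ^ 2 ≤ 1 := pow_le_one₀ hsinv0 hsinv1
        linarith
      exact mul_le_mul hα₆D hsq (by positivity) D0.le
    have h6 : α₇ * s⁻¹ ≤ A := by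
      have h61 : α₇ * s⁻¹ ≤ B * E⁻¹ :=
        mul_le_mul h₇u hsinvE hsinv0 B0.le
      have h62 : B * E⁻¹ = A := by
        rw [hBAE, mul_assoc, mul_inv_cancel₀ E0.ne', mul_one]
      linarith
    have p1 : 12 * D * s ≤ A * s := mul_le_mul_of_nonneg_right hDA hs0.le
    have p2 : 12 * G * s ≤ A * s := mul_le_mul_of_nonneg_right hGA hs0.le
    have p3 : A ≤ A * s := le_mul_of_one_le_right A0.le hs1
    linarith
  · -- Case 0 < s ≤ M^(-(2ε))
    intro s hs0 hsu
    have hEneg : M ^ (-(2 * ε)) = E⁻¹ := by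
      rw [hEdef, ← Real.rpow_neg hM0.le]
    rw [hEneg] at hsu
    set t := s⁻¹ with htdef
    have t0 : (0:ℝ) < t := by positivity
    have ht : E ≤ t := by
      have := inv_anti₀ hs0 hsu
      rwa [inv_inv] at this
    have ht2 : (2:ℝ) ≤ t := by linarith
    have ht1 : (1:ℝ) ≤ t := by linarith
    have hs1 : s ≤ 1 := by
      have : E⁻¹ ≤ 1 := inv_le_one_of_one_le₀ (by linarith)
      linarith
    -- term bounds
    have k1 : α₁ * s ≤ B := by
      have := mul_le_mul h₁u hs1 hs0.le B0.le
      simpa using this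
    have k1' : 24 * B ≤ A * t ^ 3 := by
      have hE3 : 24 * E ≤ E ^ 3 := by
        have h1 : (24:ℝ) ≤ E * E := by
          have := mul_le_mul hE144 hE144 (by norm_num) (by linarith : (0:ℝ) ≤ E)
          linarith
        calc 24 * E ≤ E * E * E := mul_le_mul_of_nonneg_right h1 E0.le
          _ = E ^ 3 := by ring
      have ht3 : E ^ 3 ≤ t ^ 3 := pow_le_pow_left₀ E0.le ht 3
      have : A * (24 * E) ≤ A * t ^ 3 :=
        mul_le_mul_of_nonneg_left (by linarith) A0.le
      rw [hBAE]; linarith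
    have k2 : 2 * α₂ * (s - 1) ≤ 0 :=
      mul_nonpos_of_nonneg_of_nonpos (by linarith) (by linarith)
    have k3 : -(α₃ * s) ≤ D := by
      have h1 : -α₃ * s ≤ D * s := mul_le_mul_of_nonneg_right hα₃D' hs0.le
      have h2 : D * s ≤ D := mul_le_of_le_one_right D0.le hs1
      linarith
    have ht3four : (4:ℝ) ≤ t ^ 3 := by
      have h := pow_le_pow_left₀ (by norm_num : (0:ℝ) ≤ 2) ht2 3
      norm_num at h; linarith
    have k3' : 48 * D ≤ A * t ^ 3 := by
      have : A * 4 ≤ A * t ^ 3 := mul_le_mul_of_nonneg_left ht3four A0.le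
      linarith [hDA]
    have k4 : A * t ^ 3 ≤ 2 * α₅ * (t ^ 3 - t ^ 2) := by
      have hmono : t ^ 2 ≤ t ^ 3 := pow_le_pow_right₀ ht1 (by norm_num)
      have w1 : 0 ≤ (α₅ - A) * (t ^ 3 - t ^ 2) :=
        mul_nonneg (by linarith) (by linarith)
      have w2 : 0 ≤ A * (t ^ 2 * (t - 2)) :=
        mul_nonneg A0.le (mul_nonneg (sq_nonneg t) (by linarith))
      linarith [w1, w2]
    have k5 : -(α₆ * t ^ 2) ≤ D * t ^ 3 := by
      have hmono : t ^ 2 ≤ t ^ 3 := pow_le_pow_right₀ ht1 (by norm_num)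
      have h1 : -α₆ * t ^ 2 ≤ D * t ^ 2 :=
        mul_le_mul_of_nonneg_right hα₆D' (sq_nonneg t)
      have h2 : D * t ^ 2 ≤ D * t ^ 3 := mul_le_mul_of_nonneg_left hmono D0.le
      linarith
    have k5' : 12 * D * t ^ 3 ≤ A * t ^ 3 :=
      mul_le_mul_of_nonneg_right hDA (by positivity)
    have k6 : 0 ≤ α₇ * t := mul_nonneg (by linarith) t0.le
    have k7 : 12 * G * t ^ 3 ≤ A * t ^ 3 :=
      mul_le_mul_of_nonneg_right hGA (by positivity)
    have hgoal : 2 * α₅ * (t ^ 2 - t ^ 3) ≤ -(A * t ^ 3) := by linarith [k4]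
    linarith
end
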